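/- Let φ ∈ C(ℝ,X) be uniformly comparable by character of recurrence with ψ ∈ C(ℝ,Y), and let ψ be Lagrange stable. If ψ is pseudo-recurrent, then φ is pseudo-recurrent. -/

import Mathlib

open Filter Topology

/-- The Bebutov metric on `C(ℝ, X)`:
`d(φ₁,φ₂) = sup_{T>0} min ( max_{|t| ≤ T} ρ(φ₁(t), φ₂(t)), 1/T )`. -/
noncomputable def bebutovDist {X : Type*} [MetricSpace X] (φ ψ : C(ℝ, X)) : ℝ :=
  ⨆ T : Set.Ioi (0 : ℝ),
    min (⨆ t : Set.Icc (-(T : ℝ)) (T : ℝ), dist (φ t.1) (ψ t.1)) (1 / (T : ℝ))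

/-- The translate `φ^h` of `φ ∈ C(ℝ,X)`, given by `φ^h(t) = φ(t + h)`. -/
def timeShift {X : Type*} [MetricSpace X] (φ : C(ℝ, X)) (h : ℝ) : C(ℝ, X) :=
  ⟨fun t => φ (t + h), φ.continuous.comp (continuous_id.add continuous_const)⟩

/-- `𝔑_φ`: the family of sequences `{tₙ} ⊂ ℝ` with `φ^{tₙ} → φ` in `(C(ℝ,X),d)`. -/
def NClass {X : Type*} [MetricSpace X] (φ : C(ℝ, X)) : Set (ℕ → ℝ) :=
  {t | Tendsto (fun n => bebutovDist (timeShift φ (t n)) φ) atTop (𝓝 0)}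

/-- `𝔐_φ`: the family of sequences `{tₙ} ⊂ ℝ` such that `{φ^{tₙ}}` converges in
`(C(ℝ,X),d)`. -/
def MClass {X : Type*} [MetricSpace X] (φ : C(ℝ, X)) : Set (ℕ → ℝ) :=
  {t | ∃ ψ : C(ℝ, X), Tendsto (fun n => bebutovDist (timeShift φ (t n)) ψ) atTop (𝓝 0)}

/-- `𝔑^u_φ`: sequences in `𝔑_φ` with `φ^{s+tₙ} → φ^s` uniformly in `s ∈ ℝ`. -/
def NuClass {X : Type*} [MetricSpace X] (φ : C(ℝ, X)) : Set (ℕ → ℝ) :=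
  {t | t ∈ NClass φ ∧ ∀ ε > (0 : ℝ), ∃ N : ℕ, ∀ n ≥ N, ∀ s : ℝ,
    bebutovDist (timeShift φ (s + t n)) (timeShift φ s) < ε}

/-- `𝔐^u_φ`: sequences in `𝔐_φ` such that `{φ^{s+tₙ}}` converges uniformly in `s ∈ ℝ`. -/
def MuClass {X : Type*} [MetricSpace X] (φ : C(ℝ, X)) : Set (ℕ → ℝ) :=
  {t | t ∈ MClass φ ∧ ∃ ψ : ℝ → C(ℝ, X), ∀ ε > (0 : ℝ), ∃ N : ℕ, ∀ n ≥ N, ∀ s : ℝ,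
    bebutovDist (timeShift φ (s + t n)) (ψ s) < ε}

/-- A subset `S ⊆ ℝ` is relatively dense if some length `l > 0` interval always meets it. -/
def RelativelyDense (S : Set ℝ) : Prop :=
  ∃ l > (0 : ℝ), ∀ a : ℝ, ∃ τ ∈ S, τ ∈ Set.Icc a (a + l)

/-- `φ` is Poisson stable: for every `ε > 0` and `l > 0` there are `ε`-shifts `τ₊ > l`
and `τ₋ < −l`. -/
def PoissonStable {X : Type*} [MetricSpace X] (φ : C(ℝ, X)) : Prop :=
  ∀ ε > (0 : ℝ), ∀ l > (0 : ℝ),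
    (∃ τ : ℝ, l < τ ∧ bebutovDist (timeShift φ τ) φ < ε) ∧
    (∃ τ : ℝ, τ < -l ∧ bebutovDist (timeShift φ τ) φ < ε)

/-- `φ` is almost recurrent in the sense of Bebutov. -/
def AlmostRecurrent {X : Type*} [MetricSpace X] (φ : C(ℝ, X)) : Prop :=
  ∀ ε > (0 : ℝ), RelativelyDense {τ : ℝ | bebutovDist (timeShift φ τ) φ < ε}

/-- `τ` is an `ε`-almost period of `φ`: `ρ(φ(t+τ),φ(t)) < ε` for all `t`. -/
def IsAlmostPeriod {X : Type*} [MetricSpace X] (φ : C(ℝ, X)) (ε τ : ℝ) : Prop :=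
  ∀ t : ℝ, dist (φ (t + τ)) (φ t) < ε

/-- `φ` is Bohr almost periodic: its set of `ε`-almost periods is relatively dense for
every `ε > 0`. -/
def BohrAlmostPeriodic {X : Type*} [MetricSpace X] (φ : C(ℝ, X)) : Prop :=
  ∀ ε > (0 : ℝ), RelativelyDense {τ : ℝ | IsAlmostPeriod φ ε τ}

/-- `φ` is Lagrange stable: every sequence of translates has a subsequence converging in
the Bebutov metric (i.e. `{φ^h : h ∈ ℝ}` is relatively compact in `(C(ℝ,X),d)`). -/
def LagrangeStable {X : Type*} [MetricSpace X] (φ : C(ℝ, X)) : Prop :=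
  ∀ h : ℕ → ℝ, ∃ (k : ℕ → ℕ) (ψ : C(ℝ, X)), StrictMono k ∧
    Tendsto (fun n => bebutovDist (timeShift φ (h (k n))) ψ) atTop (𝓝 0)

/-- `φ` is Birkhoff recurrent: almost recurrent and Lagrange stable. -/
def BirkhoffRecurrent {X : Type*} [MetricSpace X] (φ : C(ℝ, X)) : Prop :=
  AlmostRecurrent φ ∧ LagrangeStable φ

/-- `φ` is Levitan almost periodic. -/
def LevitanAlmostPeriodic {X : Type*} [MetricSpace X] (φ : C(ℝ, X)) : Prop :=
  ∃ (Z : Type) (_ : MetricSpace Z) (_ : CompleteSpace Z) (χ : C(ℝ, Z)),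
    BohrAlmostPeriodic χ ∧
    ∀ ε > (0 : ℝ), ∃ δ > (0 : ℝ), ∀ τ : ℝ, IsAlmostPeriod χ δ τ →
      bebutovDist (timeShift φ τ) φ < ε

/-- `φ` is quasi-periodic with the spectrum of frequencies `ν₁,…,ν_k`. -/
def QuasiPeriodic {X : Type*} [MetricSpace X] (φ : C(ℝ, X)) {k : ℕ} (ν : Fin k → ℝ) :
    Prop :=
  LinearIndependent ℚ ν ∧
  ∃ Φ : C((Fin k → ℝ), X),
    (∀ v : Fin k → ℝ, Φ (fun i => v i + 2 * Real.pi) = Φ v) ∧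
    ∀ t : ℝ, φ t = Φ (fun i => ν i * t)

/-- `φ` is pseudo-periodic: for every `ε > 0` and `l > 0` there exist `ε`-almost
periods `τ₊ > l` and `τ₋ < −l`. -/
def PseudoPeriodic {X : Type*} [MetricSpace X] (φ : C(ℝ, X)) : Prop :=
  ∀ ε > (0 : ℝ), ∀ l > (0 : ℝ),
    (∃ τ : ℝ, l < τ ∧ IsAlmostPeriod φ ε τ) ∧
    (∃ τ : ℝ, τ < -l ∧ IsAlmostPeriod φ ε τ)

/-- `φ` is pseudo-recurrent. -/
def PseudoRecurrent {X : Type*} [MetricSpace X] (φ : C(ℝ, X)) : Prop :=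
  ∀ ε > (0 : ℝ), ∀ l : ℝ, ∃ L : ℝ, l ≤ L ∧ ∀ τ₀ : ℝ, ∃ τ ∈ Set.Icc l L,
    ∀ t : ℝ, |t| ≤ 1 / ε → dist (φ (t + τ₀ + τ)) (φ (t + τ₀)) ≤ ε

/-! If `φ` were not pseudo-recurrent, there would be `ε > 0`, `l` and, for every `n`, a base
point `σₙ` such that no `τ ∈ [l, Lₙ]` moves `φ^{σₙ}` by at most `ε` on `[-1/ε, 1/ε]`, where `Lₙ`
is the bound given by the `1/(n+1)`-pseudo-recurrence of `ψ`. That pseudo-recurrence yields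
`τₙ ∈ [l, Lₙ]` with `d(ψ^{σₙ+τₙ}, ψ^{σₙ}) → 0`. By Lagrange stability, along a subsequence
`ψ^{σₙ}` and hence also `ψ^{σₙ+τₙ}` converge to a common limit, so the interleaved sequence
`σ₀, σ₀+τ₀, σ₁, σ₁+τ₁, …` lies in `𝔐_ψ ⊆ 𝔐_φ`. Thus `φ^{σₙ}` and `φ^{σₙ+τₙ}` have a common
limit along that subsequence, contradicting `d(φ^{σₙ+τₙ}, φ^{σₙ}) ≥ ε`. -/

section Bebutov

variable {X : Type*} [MetricSpace X]

@[simp]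
theorem timeShift_apply (φ : C(ℝ, X)) (h t : ℝ) : timeShift φ h t = φ (t + h) :=
  rfl

noncomputable def supDistIcc (f g : C(ℝ, X)) (T : ℝ) : ℝ :=
  ⨆ t : Set.Icc (-T) T, dist (f t) (g t)

theorem bddAbove_range_dist_Icc (f g : C(ℝ, X)) (T : ℝ) :
    BddAbove (Set.range fun t : Set.Icc (-T) T => dist (f t) (g t)) := by
  have := ((isCompact_Icc (a := -T) (b := T)).image (f.continuous.dist g.continuous)).bddAbove
  rwa [Set.image_eq_range] at this

theorem supDistIcc_nonneg (f g : C(ℝ, X)) (T : ℝ) : 0 ≤ supDistIcc f g T :=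
  Real.iSup_nonneg fun _ => dist_nonneg

theorem dist_le_supDistIcc (f g : C(ℝ, X)) {T t : ℝ} (ht : |t| ≤ T) :
    dist (f t) (g t) ≤ supDistIcc f g T :=
  le_ciSup (bddAbove_range_dist_Icc f g T) ⟨t, abs_le.mp ht⟩

theorem supDistIcc_le {f g : C(ℝ, X)} {T c : ℝ} (hT : 0 ≤ T)
    (H : ∀ t : ℝ, |t| ≤ T → dist (f t) (g t) ≤ c) : supDistIcc f g T ≤ c :=
  have : Nonempty (Set.Icc (-T) T) := ⟨⟨0, by simpa using hT⟩⟩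
  ciSup_le fun t => H t (abs_le.mpr t.2)

theorem supDistIcc_mono (f g : C(ℝ, X)) {T T' : ℝ} (hT : 0 ≤ T) (h : T ≤ T') :
    supDistIcc f g T ≤ supDistIcc f g T' :=
  supDistIcc_le hT fun _ ht => dist_le_supDistIcc f g (ht.trans h)

theorem supDistIcc_triangle (f g k : C(ℝ, X)) {T : ℝ} (hT : 0 ≤ T) :
    supDistIcc f k T ≤ supDistIcc f g T + supDistIcc g k T :=
  supDistIcc_le hT fun t ht => (dist_triangle _ (g t) _).trans <|
    add_le_add (dist_le_supDistIcc f g ht) (dist_le_supDistIcc g k ht)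

theorem bddAbove_range_min_supDistIcc (f g : C(ℝ, X)) :
    BddAbove (Set.range fun T : Set.Ioi (0 : ℝ) => min (supDistIcc f g T) (1 / (T : ℝ))) := by
  refine ⟨max (supDistIcc f g 1) 1, ?_⟩
  rintro _ ⟨⟨T, hT⟩, rfl⟩
  rcases le_total T 1 with hT1 | hT1
  · exact (min_le_left _ _).trans (le_max_of_le_left (supDistIcc_mono f g hT.le hT1))
  · exact (min_le_right _ _).trans (le_max_of_le_right (div_le_one_of_le₀ hT1 hT.le))

theorem le_bebutovDist (f g : C(ℝ, X)) {T : ℝ} (hT : 0 < T) :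
    min (supDistIcc f g T) (1 / T) ≤ bebutovDist f g :=
  le_ciSup (bddAbove_range_min_supDistIcc f g) (⟨T, hT⟩ : Set.Ioi (0 : ℝ))

theorem bebutovDist_nonneg (f g : C(ℝ, X)) : 0 ≤ bebutovDist f g :=
  (le_min (supDistIcc_nonneg f g 1) zero_le_one).trans (by simpa using le_bebutovDist f g one_pos)

theorem bebutovDist_comm (f g : C(ℝ, X)) : bebutovDist f g = bebutovDist g f := by
  simp only [bebutovDist, dist_comm]

theorem min_add_le_min_add_min {a b c : ℝ} (ha : 0 ≤ a) (hb : 0 ≤ b) (hc : 0 ≤ c) :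
    min (a + b) c ≤ min a c + min b c := by
  simp only [min_def]
  split_ifs <;> linarith

theorem bebutovDist_triangle (f g k : C(ℝ, X)) :
    bebutovDist f k ≤ bebutovDist f g + bebutovDist g k := by
  refine ciSup_le fun ⟨T, hT⟩ => ?_
  calc min (supDistIcc f k T) (1 / T)
      ≤ min (supDistIcc f g T + supDistIcc g k T) (1 / T) :=
        min_le_min_right _ (supDistIcc_triangle f g k hT.le)
    _ ≤ min (supDistIcc f g T) (1 / T) + min (supDistIcc g k T) (1 / T) :=
        min_add_le_min_add_min (supDistIcc_nonneg f g T) (supDistIcc_nonneg g k T)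
          (one_div_pos.mpr hT).le
    _ ≤ bebutovDist f g + bebutovDist g k :=
        add_le_add (le_bebutovDist f g hT) (le_bebutovDist g k hT)

theorem bebutovDist_le_of_forall_dist_le {f g : C(ℝ, X)} {ε : ℝ} (hε : 0 < ε)
    (H : ∀ t : ℝ, |t| ≤ 1 / ε → dist (f t) (g t) ≤ ε) : bebutovDist f g ≤ ε := by
  refine ciSup_le fun ⟨T, hT⟩ => ?_
  rcases le_total T (1 / ε) with hTε | hεT
  · exact (min_le_left _ _).trans (supDistIcc_le hT.le fun t ht => H t (ht.trans hTε))
  · exact (min_le_right _ _).trans ((one_div_le hT hε).mpr hεT)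

theorem dist_lt_of_bebutovDist_lt {f g : C(ℝ, X)} {ε t : ℝ} (h : bebutovDist f g < ε)
    (ht : |t| ≤ 1 / ε) : dist (f t) (g t) < ε := by
  have hε : 0 < ε := (bebutovDist_nonneg f g).trans_lt h
  have hmin := (le_bebutovDist f g (one_div_pos.mpr hε)).trans_lt h
  rw [one_div_one_div, min_lt_iff, or_iff_left (lt_irrefl ε)] at hmin
  exact (dist_le_supDistIcc f g ht).trans_lt hmin

theorem tendsto_bebutovDist_trans {ι : Type*} {l : Filter ι} {u v w : ι → C(ℝ, X)}
    (huv : Tendsto (fun i => bebutovDist (u i) (v i)) l (𝓝 0))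
    (hvw : Tendsto (fun i => bebutovDist (v i) (w i)) l (𝓝 0)) :
    Tendsto (fun i => bebutovDist (u i) (w i)) l (𝓝 0) := by
  refine squeeze_zero (fun i => bebutovDist_nonneg _ _) (fun i => bebutovDist_triangle _ (v i) _) ?_
  simpa using huv.add hvw

end Bebutov

section Interleave

variable {α β : Type*}

def interleave (a b : ℕ → α) (m : ℕ) : α :=
  if Even m then a (m / 2) else b (m / 2)

theorem interleave_two_mul (a b : ℕ → α) (n : ℕ) : interleave a b (2 * n) = a n := by
  simp [interleave]

theorem interleave_two_mul_add_one (a b : ℕ → α) (n : ℕ) :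
    interleave a b (2 * n + 1) = b n := by
  simp [interleave, Nat.add_div_of_dvd_right]

theorem tendsto_comp_interleave_iff {f : α → β} {a b : ℕ → α} {l : Filter β} :
    Tendsto (fun m => f (interleave a b m)) atTop l ↔
      Tendsto (fun n => f (a n)) atTop l ∧ Tendsto (fun n => f (b n)) atTop l := by
  refine ⟨fun h => ⟨?_, ?_⟩, fun ⟨ha, hb⟩ => ?_⟩
  · have h2 : StrictMono fun n : ℕ => 2 * n := fun _ _ _ => by dsimp only; omega
    simpa only [Function.comp_def, interleave_two_mul] using h.comp h2.tendsto_atTop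
  · have h2 : StrictMono fun n : ℕ => 2 * n + 1 := fun _ _ _ => by dsimp only; omega
    simpa only [Function.comp_def, interleave_two_mul_add_one] using h.comp h2.tendsto_atTop
  · refine tendsto_def.2 fun s hs => ?_
    have hhalf := Nat.tendsto_div_const_atTop two_ne_zero
    filter_upwards [hhalf.eventually (ha hs), hhalf.eventually (hb hs)] with m hma hmb
    simp only [Set.mem_preimage, interleave]
    split_ifs <;> assumption

end Interleave

section Comparable

variable {X Y : Type*} [MetricSpace X] [MetricSpace Y]

theorem interleave_mem_mClass {φ : C(ℝ, X)} {a b : ℕ → ℝ} {p : C(ℝ, X)}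
    (ha : Tendsto (fun n => bebutovDist (timeShift φ (a n)) p) atTop (𝓝 0))
    (hb : Tendsto (fun n => bebutovDist (timeShift φ (b n)) p) atTop (𝓝 0)) :
    interleave a b ∈ MClass φ :=
  ⟨p, tendsto_comp_interleave_iff (f := fun x => bebutovDist (timeShift φ x) p) |>.2 ⟨ha, hb⟩⟩

theorem tendsto_bebutovDist_timeShift_of_interleave_mem_mClass {φ : C(ℝ, X)} {a b : ℕ → ℝ}
    (h : interleave a b ∈ MClass φ) :
    Tendsto (fun n => bebutovDist (timeShift φ (a n)) (timeShift φ (b n))) atTop (𝓝 0) := by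
  obtain ⟨χ, hχ⟩ := h
  obtain ⟨ha, hb⟩ :=
    tendsto_comp_interleave_iff (f := fun x => bebutovDist (timeShift φ x) χ) |>.1 hχ
  exact tendsto_bebutovDist_trans (v := fun _ => χ) ha (by simpa only [bebutovDist_comm] using hb)

theorem exists_subseq_tendsto_bebutovDist_timeShift {φ : C(ℝ, X)} {ψ : C(ℝ, Y)}
    (h : MClass ψ ⊆ MClass φ) (hL : LagrangeStable ψ) {a b : ℕ → ℝ}
    (hab : Tendsto (fun n => bebutovDist (timeShift ψ (a n)) (timeShift ψ (b n))) atTop (𝓝 0)) :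
    ∃ k : ℕ → ℕ, StrictMono k ∧
      Tendsto (fun n => bebutovDist (timeShift φ (a (k n))) (timeShift φ (b (k n))))
        atTop (𝓝 0) := by
  obtain ⟨k, p, hk, hb⟩ := hL b
  have ha : Tendsto (fun n => bebutovDist (timeShift ψ (a (k n))) p) atTop (𝓝 0) :=
    tendsto_bebutovDist_trans (hab.comp hk.tendsto_atTop) hb
  exact ⟨k, hk, tendsto_bebutovDist_timeShift_of_interleave_mem_mClass
    (h (interleave_mem_mClass ha hb))⟩

end Comparable

theorem pseudoRecurrent_of_uniformly_comparable_general
    {X Y : Type*} [MetricSpace X] [MetricSpace Y]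
    (φ : C(ℝ, X)) (ψ : C(ℝ, Y)) (h : MClass ψ ⊆ MClass φ)
    (hL : LagrangeStable ψ) (hψ : PseudoRecurrent ψ) : PseudoRecurrent φ := by
  by_contra hφ
  simp only [PseudoRecurrent, not_forall, not_exists, not_and, not_le] at hφ
  obtain ⟨ε, hε, l, hbad⟩ := hφ
  choose L hlL hψL using fun n : ℕ => hψ (1 / (n + 1)) Nat.one_div_pos_of_nat l
  choose σ hσ using fun n => hbad (L n) (hlL n)
  choose τ hτ hψτ using fun n => hψL n (σ n)
  have hψστ (n : ℕ) :
      bebutovDist (timeShift ψ (σ n + τ n)) (timeShift ψ (σ n)) ≤ 1 / (n + 1) :=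
    bebutovDist_le_of_forall_dist_le Nat.one_div_pos_of_nat fun t ht => by
      simpa only [timeShift_apply, ← add_assoc] using hψτ n t ht
  obtain ⟨k, -, hφk⟩ := exists_subseq_tendsto_bebutovDist_timeShift h hL <|
    squeeze_zero (fun _ => bebutovDist_nonneg _ _) hψστ tendsto_one_div_add_atTop_nhds_zero_nat
  obtain ⟨n, hn⟩ := (hφk.eventually (gt_mem_nhds hε)).exists
  obtain ⟨t, ht, hεt⟩ := hσ (k n) (τ (k n)) (hτ (k n))
  have := dist_lt_of_bebutovDist_lt hn ht
  simp only [timeShift_apply, ← add_assoc] at this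
  exact this.not_gt hεt

/-- If `φ` is uniformly comparable by character of recurrence with `ψ` (`𝔐_ψ ⊆ 𝔐_φ`),
`ψ` is Lagrange stable and pseudo-recurrent, then `φ` is pseudo-recurrent. -/
theorem pseudoRecurrent_of_uniformly_comparable
    {X Y : Type*} [MetricSpace X] [CompleteSpace X] [MetricSpace Y] [CompleteSpace Y]
    (φ : C(ℝ, X)) (ψ : C(ℝ, Y)) (h : MClass ψ ⊆ MClass φ)
    (hL : LagrangeStable ψ) (hψ : PseudoRecurrent ψ) : PseudoRecurrent φ :=
  pseudoRecurrent_of_uniformly_comparable_general φ ψ h hL hψ
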